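/- Let z ≥ 1 be an integer and let a be an integer with a ≥ 4(z+2)^2. Let β be the unique real root greater than 1 of the polynomial P(X) = X^3 − aX^2 − (a−z)X + 1. Then L_⊕(β) = 1. -/

import Mathlib

/-!
The lower bound comes from the root equation, which reads `aβ + (a - z) = β² + β⁻¹`: both
summands are β-integers, but the sum has the finite expansion `100.1`, which is not an integer.

For the upper bound, `β` has a conjugate `γ ∈ [0, 2/a]`. Let `x, y ∈ ℤ_β` with `x + y ∈ fin(β)`.
If the expansion of `x + y` had at least `K ≥ 2` fractional digits, then `β^K |x + y| = r(β)`
for the digit polynomial `r` of that expansion, whose constant term is a nonzero digit, while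
`x + y = w(β)` for a polynomial `w` with coefficients bounded by `2a`. Transporting the identity
to `γ` gives `1 ≤ r(γ) = γ^K |w(γ)| ≤ 2aγ² / (1 - γ) < 1`. Hence `β (x + y) ∈ ℤ_β`.
-/

open Polynomial

/-- The β-transformation `T_β(x) = βx - ⌊βx⌋`. -/
noncomputable def betaT (β : ℝ) : ℝ → ℝ := fun x => β * x - ⌊β * x⌋

/-- `fin(β)`: reals `x` such that `|x|/β^N ∈ [0,1)` and the greedy expansion of
`|x|/β^N` is finite, for some `N, n ∈ ℕ`. -/
def finBeta (β : ℝ) : Set ℝ :=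
  {x | ∃ N n : ℕ, |x| / β ^ N ∈ Set.Ico (0 : ℝ) 1 ∧ (betaT β)^[n] (|x| / β ^ N) = 0}

/-- `ℤ_β`: the set of β-integers. -/
def betaInt (β : ℝ) : Set ℝ :=
  {x | ∃ N : ℕ, |x| / β ^ N ∈ Set.Ico (0 : ℝ) 1 ∧ (betaT β)^[N] (|x| / β ^ N) = 0}

/-- `L_⊕(β)`: the least `L ∈ ℕ` such that `β^L·(x+y) ∈ ℤ_β` for all
`x, y ∈ ℤ_β` with `x + y ∈ fin(β)`. -/
noncomputable def Lplus (β : ℝ) : ℕ :=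
  sInf {L : ℕ | ∀ x ∈ betaInt β, ∀ y ∈ betaInt β,
    x + y ∈ finBeta β → β ^ L * (x + y) ∈ betaInt β}

/-- `L_⊗(β)`: the least `L ∈ ℕ` such that `β^L·(x·y) ∈ ℤ_β` for all
`x, y ∈ ℤ_β` with `x·y ∈ fin(β)`. -/
noncomputable def Lmul (β : ℝ) : ℕ :=
  sInf {L : ℕ | ∀ x ∈ betaInt β, ∀ y ∈ betaInt β,
    x * y ∈ finBeta β → β ^ L * (x * y) ∈ betaInt β}

section BetaTransformation

variable {β : ℝ}

lemma betaT_apply (β x : ℝ) : betaT β x = Int.fract (β * x) := rfl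

lemma betaT_mem_Ico (β x : ℝ) : betaT β x ∈ Set.Ico (0 : ℝ) 1 :=
  ⟨Int.fract_nonneg _, Int.fract_lt_one _⟩

lemma betaT_iterate_mem_Ico {u : ℝ} (hu : u ∈ Set.Ico (0 : ℝ) 1) :
    ∀ j : ℕ, (betaT β)^[j] u ∈ Set.Ico (0 : ℝ) 1
  | 0 => hu
  | j + 1 => by
    rw [Function.iterate_succ_apply']
    exact betaT_mem_Ico β _

lemma betaT_iterate_zero (β : ℝ) (n : ℕ) : (betaT β)^[n] 0 = 0 :=
  Function.iterate_fixed (by simp [betaT_apply]) n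

lemma betaT_inv (hβ : β ≠ 0) : betaT β β⁻¹ = 0 := by
  simp [betaT_apply, mul_inv_cancel₀ hβ]

lemma betaT_div_self (hβ : β ≠ 0) {w : ℝ} (hw : w ∈ Set.Ico (0 : ℝ) 1) :
    betaT β (w / β) = w := by
  rw [betaT_apply, mul_div_cancel₀ _ hβ, Int.fract_eq_self.2 hw]

lemma div_pow_mem_Ico (hβ : 1 ≤ β) {w : ℝ} (hw : w ∈ Set.Ico (0 : ℝ) 1) (j : ℕ) :
    w / β ^ j ∈ Set.Ico (0 : ℝ) 1 :=
  ⟨div_nonneg hw.1 (by positivity),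
    (div_le_self hw.1 (one_le_pow₀ hβ)).trans_lt hw.2⟩

lemma betaT_iterate_div_pow (hβ : 1 ≤ β) {w : ℝ} (hw : w ∈ Set.Ico (0 : ℝ) 1) :
    ∀ j : ℕ, (betaT β)^[j] (w / β ^ j) = w
  | 0 => by simp
  | j + 1 => by
    rw [Function.iterate_succ_apply, pow_succ, ← div_div,
      betaT_div_self (by positivity) (div_pow_mem_Ico hβ hw j), betaT_iterate_div_pow hβ hw j]

lemma mem_betaInt_of_iterate_eq_zero {x : ℝ} {N n : ℕ}
    (hx : |x| / β ^ N ∈ Set.Ico (0 : ℝ) 1) (hn : n ≤ N) (hT : (betaT β)^[n] (|x| / β ^ N) = 0) :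
    x ∈ betaInt β :=
  ⟨N, hx, by
    rw [← Nat.sub_add_cancel hn, Function.iterate_add_apply, Nat.sub_add_cancel hn, hT,
      betaT_iterate_zero]⟩

lemma intCast_mul_pow_mem_betaInt (hβ : 0 < β) {m : ℤ} (hm : 0 ≤ m) (hmβ : m < β) (k : ℕ) :
    m * β ^ k ∈ betaInt β := by
  have hdiv : |m * β ^ k| / β ^ (k + 1) = m / β := by
    rw [abs_of_nonneg (by positivity), pow_succ]
    field_simp
  have hmem : |m * β ^ k| / β ^ (k + 1) ∈ Set.Ico (0 : ℝ) 1 :=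
    hdiv ▸ ⟨by positivity, (div_lt_one hβ).2 hmβ⟩
  refine mem_betaInt_of_iterate_eq_zero hmem (n := 1) (by omega) ?_
  rw [hdiv, Function.iterate_one, betaT_apply, mul_div_cancel₀ _ hβ.ne', Int.fract_intCast]

end BetaTransformation

section LowerBound

variable {β : ℝ}

/-- `(β² + β⁻¹)/β³` has greedy expansion `.1001`. -/
lemma betaT_iterate_three_sq_add_inv (hβ : 2 ≤ β) :
    (betaT β)^[3] ((β ^ 2 + β⁻¹) / β ^ 3) = β⁻¹ := by
  have hβ0 : β ≠ 0 := by positivity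
  have hinv : β⁻¹ ∈ Set.Ico (0 : ℝ) 1 := ⟨by positivity, inv_lt_one_of_one_lt₀ (by linarith)⟩
  have hfirst : betaT β ((β ^ 2 + β⁻¹) / β ^ 3) = β⁻¹ / β ^ 2 := by
    have hsmall : β⁻¹ / β ^ 2 ∈ Set.Ico (0 : ℝ) 1 := div_pow_mem_Ico (by linarith) hinv 2
    have hβmul : β * ((β ^ 2 + β⁻¹) / β ^ 3) = 1 + β⁻¹ / β ^ 2 := by field_simp
    rw [betaT_apply, hβmul, Int.fract_one_add, Int.fract_eq_self.2 hsmall]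
  rw [show 3 = 2 + 1 from rfl, Function.iterate_add_apply, Function.iterate_one, hfirst,
    betaT_iterate_div_pow (by linarith) hinv]

lemma sq_add_inv_div_pow_three_mem_Ico (hβ : 2 ≤ β) :
    (β ^ 2 + β⁻¹) / β ^ 3 ∈ Set.Ico (0 : ℝ) 1 := by
  refine ⟨by positivity, ?_⟩
  rw [div_lt_one (by positivity)]
  nlinarith [inv_le_one_of_one_le₀ (by linarith : (1 : ℝ) ≤ β)]

lemma sq_add_inv_mem_finBeta (hβ : 2 ≤ β) : β ^ 2 + β⁻¹ ∈ finBeta β := by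
  refine ⟨3, 4, ?_, ?_⟩ <;> rw [abs_of_pos (by positivity)]
  · exact sq_add_inv_div_pow_three_mem_Ico hβ
  · rw [Function.iterate_succ_apply', betaT_iterate_three_sq_add_inv hβ,
      betaT_inv (by positivity)]

lemma sq_add_inv_notMem_betaInt (hβ : 2 ≤ β) : β ^ 2 + β⁻¹ ∉ betaInt β := by
  rintro ⟨N, hN, hT⟩
  rw [abs_of_pos (by positivity)] at hN hT
  obtain hN2 | ⟨j, rfl⟩ : N ≤ 2 ∨ ∃ j, N = 3 + j := by
    rcases le_or_gt N 2 with h | h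
    · exact .inl h
    · exact .inr ⟨N - 3, by omega⟩
  · have : β ^ 2 ≤ β ^ 2 + β⁻¹ := by simp [show (0 : ℝ) ≤ β⁻¹ by positivity]
    have := hN.2
    rw [div_lt_one (by positivity)] at this
    linarith [pow_le_pow_right₀ (by linarith : (1 : ℝ) ≤ β) hN2]
  · rw [pow_add, ← div_div, Function.iterate_add_apply,
      betaT_iterate_div_pow (by linarith) (sq_add_inv_div_pow_three_mem_Ico hβ),
      betaT_iterate_three_sq_add_inv hβ] at hT
    exact (inv_ne_zero (by positivity)) hT

end LowerBound

section Digits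

variable {β : ℝ}

noncomputable def betaDigit (β u : ℝ) (j : ℕ) : ℤ := ⌊β * (betaT β)^[j] u⌋

/-- `∑_{j < k} dⱼ X^(k-1-j)`, where `dⱼ = betaDigit β u j`. -/
noncomputable def betaDigitPoly (β u : ℝ) : ℕ → ℤ[X]
  | 0 => 0
  | k + 1 => X * betaDigitPoly β u k + C (betaDigit β u k)

lemma betaT_iterate_succ (β u : ℝ) (k : ℕ) :
    (betaT β)^[k + 1] u = β * (betaT β)^[k] u - betaDigit β u k := by
  rw [Function.iterate_succ_apply']
  rfl

lemma betaDigit_mem_Icc (hβ : 0 ≤ β) {u : ℝ} (hu : u ∈ Set.Ico (0 : ℝ) 1) (j : ℕ) :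
    betaDigit β u j ∈ Set.Icc 0 ⌊β⌋ := by
  have ht := betaT_iterate_mem_Ico (β := β) hu j
  exact ⟨Int.floor_nonneg.2 (mul_nonneg hβ ht.1),
    Int.floor_mono (mul_le_of_le_one_right hβ ht.2.le)⟩

lemma one_le_betaDigit (hβ : 0 < β) {u : ℝ} (hu : u ∈ Set.Ico (0 : ℝ) 1) {k : ℕ}
    (hk : (betaT β)^[k] u ≠ 0) (hk1 : (betaT β)^[k + 1] u = 0) : 1 ≤ betaDigit β u k := by
  rw [betaT_iterate_succ, sub_eq_zero] at hk1
  have hpos : (0 : ℝ) < betaDigit β u k :=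
    hk1 ▸ mul_pos hβ (lt_of_le_of_ne (betaT_iterate_mem_Ico hu k).1 hk.symm)
  exact_mod_cast hpos

lemma pow_mul_eq_aeval_betaDigitPoly_add (β u : ℝ) (k : ℕ) :
    β ^ k * u = aeval β (betaDigitPoly β u k) + (betaT β)^[k] u := by
  induction k with
  | zero => simp [betaDigitPoly]
  | succ k ih =>
    rw [betaT_iterate_succ, betaDigitPoly, pow_succ', mul_assoc, ih]
    simp only [map_add, map_mul, aeval_X, eq_intCast, map_intCast]
    ring

lemma betaDigitPoly_coeff_zero (β u : ℝ) (k : ℕ) :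
    (betaDigitPoly β u (k + 1)).coeff 0 = betaDigit β u k := by
  simp [betaDigitPoly]

lemma betaDigitPoly_coeff_mem_Icc (hβ : 0 ≤ β) {u : ℝ} (hu : u ∈ Set.Ico (0 : ℝ) 1) (k i : ℕ) :
    (betaDigitPoly β u k).coeff i ∈ Set.Icc 0 ⌊β⌋ := by
  induction k generalizing i with
  | zero => simpa [betaDigitPoly] using Int.floor_nonneg.2 hβ
  | succ k ih =>
    cases i with
    | zero => simpa [betaDigitPoly] using betaDigit_mem_Icc hβ hu k
    | succ i => simpa only [betaDigitPoly, coeff_add, coeff_X_mul, coeff_C_succ, add_zero] using ih i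

lemma exists_aeval_eq_of_mem_betaInt (hβ : 0 < β) {x : ℝ} (hx : x ∈ betaInt β) :
    ∃ p : ℤ[X], aeval β p = x ∧ ∀ i, |p.coeff i| ≤ ⌊β⌋ := by
  obtain ⟨N, hu, hT⟩ := hx
  have hrepr := pow_mul_eq_aeval_betaDigitPoly_add β (|x| / β ^ N) N
  rw [hT, add_zero, mul_div_cancel₀ _ (by positivity)] at hrepr
  have hcoeff (i : ℕ) : |(betaDigitPoly β (|x| / β ^ N) N).coeff i| ≤ ⌊β⌋ := by
    obtain ⟨h0, h1⟩ := betaDigitPoly_coeff_mem_Icc hβ.le hu N i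
    rwa [abs_of_nonneg h0]
  rcases abs_choice x with h | h
  · exact ⟨_, by rw [← hrepr, h], hcoeff⟩
  · exact ⟨-betaDigitPoly β (|x| / β ^ N) N, by rw [map_neg, ← hrepr, h, neg_neg],
      by simpa using hcoeff⟩

end Digits

section PolynomialBounds

variable {γ : ℝ}

lemma coeff_zero_le_aeval (hγ : 0 ≤ γ) {p : ℤ[X]} (hp : ∀ i, 0 ≤ p.coeff i) :
    (p.coeff 0 : ℝ) ≤ aeval γ p := by
  rw [aeval_eq_sum_range, Finset.sum_range_succ']
  simp only [pow_zero, zsmul_eq_mul, mul_one, le_add_iff_nonneg_left]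
  exact Finset.sum_nonneg fun i _ => mul_nonneg (by exact_mod_cast hp _) (by positivity)

lemma abs_aeval_mul_one_sub_le (hγ0 : 0 ≤ γ) (hγ1 : γ < 1) {p : ℤ[X]} {c : ℝ}
    (hp : ∀ i, |(p.coeff i : ℝ)| ≤ c) : |aeval γ p| * (1 - γ) ≤ c := by
  have hc : 0 ≤ c := (abs_nonneg _).trans (hp 0)
  have hsum : |aeval γ p| ≤ c * ∑ i ∈ Finset.range (p.natDegree + 1), γ ^ i := by
    rw [aeval_eq_sum_range, Finset.mul_sum]
    refine (Finset.abs_sum_le_sum_abs _ _).trans (Finset.sum_le_sum fun i _ => ?_)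
    rw [zsmul_eq_mul, abs_mul, abs_of_nonneg (pow_nonneg hγ0 i)]
    exact mul_le_mul_of_nonneg_right (hp i) (by positivity)
  calc |aeval γ p| * (1 - γ)
      ≤ c * ((∑ i ∈ Finset.range (p.natDegree + 1), γ ^ i) * (1 - γ)) := by
        rw [← mul_assoc]
        exact mul_le_mul_of_nonneg_right hsum (by linarith)
    _ = c * (1 - γ ^ (p.natDegree + 1)) := by rw [geom_sum_mul_neg]
    _ ≤ c := mul_le_of_le_one_right hc (by linarith [pow_nonneg hγ0 (p.natDegree + 1)])

end PolynomialBounds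

section UpperBound

variable {β γ : ℝ}

/-- Squaring removes the sign: `r² - X^(2K) w²` vanishes at `β`, hence at `γ`, and there
`r(γ) ≥ 1` while `γ^K |w(γ)| ≤ γ² c / (1 - γ) < 1`. -/
lemma aeval_ne_pow_mul_abs_aeval (hγ0 : 0 ≤ γ) (hγ1 : γ < 1)
    (hconj : ∀ Q : ℤ[X], aeval β Q = 0 → aeval γ Q = 0) {c : ℝ} (hsmall : c * γ ^ 2 < 1 - γ)
    {r w : ℤ[X]} (hr : ∀ i, 0 ≤ r.coeff i) (hr0 : 1 ≤ r.coeff 0)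
    (hw : ∀ i, |(w.coeff i : ℝ)| ≤ c) {K : ℕ} (hK : 2 ≤ K) :
    aeval β r ≠ β ^ K * |aeval β w| := by
  intro h
  have hQ := hconj (r ^ 2 - X ^ (2 * K) * w ^ 2) (by
    simp only [map_sub, map_mul, map_pow, aeval_X, h]
    rw [mul_pow, sq_abs, pow_mul']
    ring)
  simp only [map_sub, map_mul, map_pow, aeval_X, sub_eq_zero] at hQ
  have hrγ : (1 : ℝ) ≤ aeval γ r :=
    (by exact_mod_cast hr0 : (1 : ℝ) ≤ r.coeff 0).trans (coeff_zero_le_aeval hγ0 hr)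
  have habs : |aeval γ r| = γ ^ K * |aeval γ w| := by
    rw [← abs_of_nonneg (pow_nonneg hγ0 K), ← abs_mul, ← sq_eq_sq_iff_abs_eq_abs, hQ]
    ring
  have hbound := abs_aeval_mul_one_sub_le hγ0 hγ1 hw
  have hγK : γ ^ K ≤ γ ^ 2 := pow_le_pow_of_le_one hγ0 hγ1.le hK
  rw [abs_of_nonneg (by linarith)] at habs
  nlinarith [abs_nonneg (aeval γ w), mul_le_mul_of_nonneg_right hγK (abs_nonneg (aeval γ w)),
    mul_le_mul_of_nonneg_left hbound (sq_nonneg γ)]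

lemma le_of_betaT_iterate_abs_add_div_pow (hβ : 0 < β) (hγ0 : 0 ≤ γ) (hγ1 : γ < 1)
    (hconj : ∀ Q : ℤ[X], aeval β Q = 0 → aeval γ Q = 0)
    (hsmall : 2 * ⌊β⌋ * γ ^ 2 < 1 - γ) {x y : ℝ} (hx : x ∈ betaInt β) (hy : y ∈ betaInt β)
    {N n : ℕ} (hv : |x + y| / β ^ N ∈ Set.Ico (0 : ℝ) 1)
    (hn : (betaT β)^[n] (|x + y| / β ^ N) ≠ 0) (hn1 : (betaT β)^[n + 1] (|x + y| / β ^ N) = 0) :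
    n ≤ N := by
  by_contra! hlt
  obtain ⟨K, rfl⟩ : ∃ K, n = N + 1 + K := ⟨n - (N + 1), by omega⟩
  obtain ⟨p, hp, hpc⟩ := exists_aeval_eq_of_mem_betaInt hβ hx
  obtain ⟨q, hq, hqc⟩ := exists_aeval_eq_of_mem_betaInt hβ hy
  have hrepr := pow_mul_eq_aeval_betaDigitPoly_add β (|x + y| / β ^ N) (N + 1 + K + 1)
  rw [hn1, add_zero] at hrepr
  have hr0 : 1 ≤ (betaDigitPoly β (|x + y| / β ^ N) (N + 1 + K + 1)).coeff 0 := by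
    rw [betaDigitPoly_coeff_zero]
    exact one_le_betaDigit hβ hv hn hn1
  have hw (i : ℕ) : |((p + q).coeff i : ℝ)| ≤ 2 * ⌊β⌋ := by
    rw [coeff_add, Int.cast_add, two_mul]
    exact (abs_add_le _ _).trans (add_le_add (by exact_mod_cast hpc i) (by exact_mod_cast hqc i))
  refine aeval_ne_pow_mul_abs_aeval hγ0 hγ1 hconj hsmall
    (fun i => (betaDigitPoly_coeff_mem_Icc hβ.le hv _ i).1) hr0 hw (K := K + 2) (by omega) ?_
  rw [← hrepr, map_add, hp, hq]
  field_simp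
  ring

lemma pow_one_mul_add_mem_betaInt (hβ : 0 < β) (hγ0 : 0 ≤ γ) (hγ1 : γ < 1)
    (hconj : ∀ Q : ℤ[X], aeval β Q = 0 → aeval γ Q = 0)
    (hsmall : 2 * ⌊β⌋ * γ ^ 2 < 1 - γ) {x y : ℝ} (hx : x ∈ betaInt β) (hy : y ∈ betaInt β)
    (hxy : x + y ∈ finBeta β) : β ^ 1 * (x + y) ∈ betaInt β := by
  classical
  obtain ⟨N, n₀, hv, hvT⟩ := hxy
  have hex : ∃ n, (betaT β)^[n] (|x + y| / β ^ N) = 0 := ⟨n₀, hvT⟩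
  obtain ⟨n, hn, hmin⟩ : ∃ n, (betaT β)^[n] (|x + y| / β ^ N) = 0 ∧
      ∀ m < n, (betaT β)^[m] (|x + y| / β ^ N) ≠ 0 :=
    ⟨Nat.find hex, Nat.find_spec hex, fun _ => Nat.find_min hex⟩
  have hdiv : |β ^ 1 * (x + y)| / β ^ (N + 1) = |x + y| / β ^ N := by
    rw [abs_mul, abs_of_pos (by positivity), pow_succ']
    field_simp
    ring
  refine mem_betaInt_of_iterate_eq_zero (N := N + 1) (hdiv ▸ hv) ?_ (hdiv ▸ hn)
  cases n with
  | zero => omega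
  | succ n =>
    exact Nat.succ_le_succ <| le_of_betaT_iterate_abs_add_div_pow hβ hγ0 hγ1 hconj hsmall hx hy hv
      (hmin n n.lt_succ_self) hn

end UpperBound

lemma Lplus_eq_one_of {β : ℝ}
    (h1 : ∀ x ∈ betaInt β, ∀ y ∈ betaInt β, x + y ∈ finBeta β → β ^ 1 * (x + y) ∈ betaInt β)
    (h0 : ∃ x ∈ betaInt β, ∃ y ∈ betaInt β, x + y ∈ finBeta β ∧ x + y ∉ betaInt β) :
    Lplus β = 1 := by
  refine le_antisymm (Nat.sInf_le h1) (Nat.one_le_iff_ne_zero.2 fun h => ?_)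
  obtain ⟨x, hx, y, hy, hxy, hnot⟩ := h0
  rcases Nat.sInf_eq_zero.1 h with h | h
  · exact hnot (by simpa using h x hx y hy hxy)
  · exact h.subset h1

lemma exists_betaInt_add_notMem_betaInt {β : ℝ} (hβ : 2 ≤ β) {m n : ℤ} (hm : 0 ≤ m)
    (hmβ : m < β) (hn : 0 ≤ n) (hnβ : n < β) (h : m * β + n = β ^ 2 + β⁻¹) :
    ∃ x ∈ betaInt β, ∃ y ∈ betaInt β, x + y ∈ finBeta β ∧ x + y ∉ betaInt β := by
  have hβ0 : 0 < β := by linarith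
  refine ⟨m * β ^ 1, intCast_mul_pow_mem_betaInt hβ0 hm hmβ 1,
    n * β ^ 0, intCast_mul_pow_mem_betaInt hβ0 hn hnβ 0, ?_⟩
  rw [pow_one, pow_zero, mul_one, h]
  exact ⟨sq_add_inv_mem_finBeta hβ, sq_add_inv_notMem_betaInt hβ⟩

lemma aeval_eq_zero_of_irreducible {K L : Type*} [Field K] [Ring L] [Nontrivial L]
    [Algebra K L] {P : K[X]} (hP : Irreducible P) {β γ : L} (hβ : aeval β P = 0)
    (hγ : aeval γ P = 0) {Q : K[X]} (hQ : aeval β Q = 0) : aeval γ Q = 0 := by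
  obtain ⟨R, rfl⟩ := minpoly.dvd K β hQ
  rw [← minpoly.eq_of_irreducible hP hβ, map_mul, map_mul, hγ, zero_mul, zero_mul]

section Cubic

noncomputable def cubicPoly (a z : ℤ) : ℤ[X] := X ^ 3 - C a * X ^ 2 - C (a - z) * X + 1

variable {a z : ℤ}

@[simp]
lemma aeval_cubicPoly {R : Type*} [CommRing R] (t : R) :
    aeval t (cubicPoly a z) = t ^ 3 - a * t ^ 2 - (a - z) * t + 1 := by
  simp [cubicPoly]

lemma cubicPoly_monic : (cubicPoly a z).Monic := by
  unfold cubicPoly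
  monicity!

lemma cubicPoly_natDegree : (cubicPoly a z).natDegree = 3 := by
  unfold cubicPoly
  compute_degree!

lemma irreducible_map_cubicPoly (hz : 0 < z) (hza : z < a) :
    Irreducible ((cubicPoly a z).map (algebraMap ℤ ℚ)) := by
  refine irreducible_of_degree_le_three_of_not_isRoot
    (by rw [cubicPoly_monic.natDegree_map, cubicPoly_natDegree]; decide) fun r hr => ?_
  rw [IsRoot, eval_map_algebraMap] at hr
  obtain ⟨k, rfl, hk⟩ := exists_integer_of_is_root_of_monic cubicPoly_monic hr
  have hk1 : k = 1 ∨ k = -1 := Int.isUnit_iff.1 (isUnit_of_dvd_one (by simpa [cubicPoly] using hk))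
  have hkroot : aeval k (cubicPoly a z) = 0 := by
    rwa [aeval_algebraMap_apply, algebraMap_int_eq, eq_intCast, Int.cast_eq_zero] at hr
  rw [aeval_cubicPoly] at hkroot
  rcases hk1 with rfl | rfl <;> norm_num at hkroot <;> omega

lemma cubicPoly_root_mem_Ioo (hz : 0 ≤ z) (hza : z < a) {β : ℝ} (hβ : 1 < β)
    (hroot : aeval β (cubicPoly a z) = 0) : β ∈ Set.Ioo (a : ℝ) (a + 1) := by
  rw [aeval_cubicPoly] at hroot
  have hz' : (0 : ℝ) ≤ z := by exact_mod_cast hz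
  have hza' : (z : ℝ) + 1 ≤ a := by exact_mod_cast hza
  have haβ : (a : ℝ) < β := by nlinarith
  exact ⟨haβ, by nlinarith⟩

lemma exists_cubicPoly_root_mem_Icc (hz : 0 ≤ z) (ha : 4 * (z + 2) ^ 2 ≤ a) :
    ∃ γ ∈ Set.Icc (0 : ℝ) (2 / a), aeval γ (cubicPoly a z) = 0 := by
  have ha' : (4 : ℝ) * (z + 2) ^ 2 ≤ a := by exact_mod_cast ha
  have hz' : (0 : ℝ) ≤ z := by exact_mod_cast hz
  have hapos : (0 : ℝ) < a := by nlinarith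
  have hneg : aeval (2 / a : ℝ) (cubicPoly a z) < 0 := by
    rw [aeval_cubicPoly, show (2 / a : ℝ) ^ 3 - a * (2 / a) ^ 2 - (a - z) * (2 / a) + 1
      = (8 - 4 * a ^ 2 - a ^ 3 + 2 * z * a ^ 2) / a ^ 3 by field_simp; ring]
    have h2z : (2 * z + 16 : ℝ) ≤ a := by nlinarith
    exact div_neg_of_neg_of_pos (by nlinarith [mul_le_mul_of_nonneg_left h2z (sq_nonneg (a : ℝ))])
      (by positivity)
  exact intermediate_value_Icc' (by positivity) (cubicPoly a z).continuous_aeval.continuousOn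
    ⟨hneg.le, by simp⟩

end Cubic

lemma exists_small_conjugate_of_cubicPoly_root {a z : ℤ} (hz : 1 ≤ z)
    (ha : 4 * (z + 2) ^ 2 ≤ a) {β : ℝ} (hβ : aeval β (cubicPoly a z) = 0) :
    ∃ γ : ℝ, 0 ≤ γ ∧ γ < 1 ∧ (∀ Q : ℤ[X], aeval β Q = 0 → aeval γ Q = 0) ∧
      2 * a * γ ^ 2 < 1 - γ := by
  obtain ⟨γ, ⟨hγ0, hγa⟩, hγ⟩ := exists_cubicPoly_root_mem_Icc (by omega) ha
  have ha36 : (36 : ℝ) ≤ a := by exact_mod_cast (by nlinarith : (36 : ℤ) ≤ a)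
  have haγ : a * γ ≤ 2 := by rwa [le_div_iff₀ (by linarith), mul_comm] at hγa
  have hγ18 : γ ≤ 1 / 18 := hγa.trans (by rw [div_le_div_iff₀ (by linarith) (by norm_num)]; linarith)
  refine ⟨γ, hγ0, by linarith, fun Q hQ => ?_, by nlinarith⟩
  have hmap := aeval_eq_zero_of_irreducible (β := β) (γ := γ)
    (irreducible_map_cubicPoly (a := a) (z := z) (by omega) (by nlinarith)) (by rwa [aeval_map_algebraMap]) (by rwa [aeval_map_algebraMap])
    (Q := Q.map (algebraMap ℤ ℚ)) (by rwa [aeval_map_algebraMap])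
  rwa [aeval_map_algebraMap] at hmap

theorem stmt10 (z a : ℤ) (hz : 1 ≤ z) (ha : 4 * (z + 2) ^ 2 ≤ a) (β : ℝ)
    (hβ : 1 < β)
    (hroot : β ^ 3 - (a : ℝ) * β ^ 2 - ((a : ℝ) - (z : ℝ)) * β + 1 = 0) :
    Lplus β = 1 := by
  have hza : z < a := by nlinarith
  have hβP : aeval β (cubicPoly a z) = 0 := by rwa [aeval_cubicPoly]
  obtain ⟨haβ, hβa⟩ := cubicPoly_root_mem_Ioo (by omega) hza hβ hβP
  obtain ⟨γ, hγ0, hγ1, hconj, hsmall⟩ := exists_small_conjugate_of_cubicPoly_root hz ha hβP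
  rw [← Int.floor_eq_iff.2 ⟨haβ.le, hβa⟩] at hsmall
  refine Lplus_eq_one_of
    (fun x hx y hy => pow_one_mul_add_mem_betaInt (by linarith) hγ0 hγ1 hconj hsmall hx hy) ?_
  have hz' : (1 : ℝ) ≤ z := by exact_mod_cast hz
  have ha' : (2 : ℝ) ≤ a := by exact_mod_cast (by nlinarith : 2 ≤ a)
  refine exists_betaInt_add_notMem_betaInt (m := a) (n := a - z) (by linarith) (by omega) haβ
    (by omega) (by push_cast; linarith) ?_
  field_simp
  push_cast
  linear_combination -hroot
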